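/- arXiv:2509.20332 — 3 statements merged into one kernel-verified Lean document; each statement's English description precedes it below -/
import Mathlib

section
/- Let X, Y be disjoint sets of distinct reals, N = |X| + |Y|, x ∈ X, X' = X \ {x}, and x* a real distinct from all values in X' ∪ Y, X* = {x*} ∪ X'. Suppose (rank(x, X∪Y) - (N+1)/2)(rank(x*, X*∪Y) - (N+1)/2) ≥ 0 and |rank(x, X∪Y) - (N+1)/2| ≥ |rank(x*, X*∪Y) - (N+1)/2|. Then T(X,Y) ≥ T(X*,Y), where T is the Ansari-Bradley statistic. -/
open Finset

/-- rank of `x` in `Z`: number of elements of `Z` less than or equal to `x`. -/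
noncomputable def rk (x : ℝ) (Z : Finset ℝ) : ℕ := (Z.filter (fun z => z ≤ x)).card

/-- Ansari-Bradley test statistic. -/
noncomputable def ABT (A B : Finset ℝ) : ℝ :=
  ∑ a ∈ A, |(rk a (A ∪ B) : ℝ) - (((A ∪ B).card : ℝ) + 1) / 2|

/-! Both pooled samples are `Z = X' ∪ Y` with one point added (`x`, resp. `x*`). Adding `x`
rather than `x*` shifts the rank of `a ∈ Z` by one exactly when `a` lies between them, so the
summands of the elements of `X'` change in total by at most the number of points of `Z` between
`x` and `x*`, which is the difference of the ranks of `x` and `x*`. The sign and size hypotheses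
say that the summand of the replaced point drops by exactly that difference. -/

lemma rk_insert_of_notMem {u : ℝ} {Z : Finset ℝ} (hu : u ∉ Z) (a : ℝ) :
    rk a (insert u Z) = rk a Z + if u ≤ a then 1 else 0 := by
  unfold rk
  rw [filter_insert]
  split_ifs
  · exact card_insert_of_notMem fun hm => hu (mem_filter.mp hm).1
  · rfl

lemma rk_self_insert {u : ℝ} {Z : Finset ℝ} (hu : u ∉ Z) : rk u (insert u Z) = rk u Z + 1 := by
  rw [rk_insert_of_notMem hu, if_pos le_rfl]

lemma rk_mono (Z : Finset ℝ) : Monotone (rk · Z) := fun _ _ h =>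
  card_le_card <| monotone_filter_right _ fun _ _ hz => hz.trans h

lemma card_filter_le_add_rk {u : ℝ} {Z : Finset ℝ} (hu : u ∉ Z) :
    #(Z.filter (u ≤ ·)) + rk u Z = #Z := by
  have : Z.filter (u ≤ ·) = Z.filter (¬ · ≤ u) := filter_congr fun a ha =>
    have hau : a ≠ u := ne_of_mem_of_not_mem ha hu
    ⟨fun h h' => hau (le_antisymm h' h), fun h => (not_le.mp h).le⟩
  rw [this, add_comm]
  exact card_filter_add_card_filter_not _

lemma sum_abs_rk_insert_sub_rk_insert {u v : ℝ} {Z : Finset ℝ} (hu : u ∉ Z) (hv : v ∉ Z) :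
    ∑ a ∈ Z, |(rk a (insert u Z) : ℝ) - rk a (insert v Z)| = |(rk u Z : ℝ) - rk v Z| := by
  wlog huv : u ≤ v generalizing u v
  · rw [abs_sub_comm, ← this hv hu (le_of_not_ge huv)]
    exact sum_congr rfl fun a _ => abs_sub_comm _ _
  have hterm (a : ℝ) : |(rk a (insert u Z) : ℝ) - rk a (insert v Z)|
      = (if u ≤ a then 1 else 0) - (if v ≤ a then 1 else 0) := by
    rw [rk_insert_of_notMem hu, rk_insert_of_notMem hv, abs_of_nonneg]
    · push_cast; ring
    · have : v ≤ a → u ≤ a := huv.trans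
      split_ifs <;> simp_all
  have hrk : (rk u Z : ℝ) ≤ rk v Z := by exact_mod_cast rk_mono Z huv
  have hu' : (#(Z.filter (u ≤ ·)) : ℝ) + rk u Z = #Z := by exact_mod_cast card_filter_le_add_rk hu
  have hv' : (#(Z.filter (v ≤ ·)) : ℝ) + rk v Z = #Z := by exact_mod_cast card_filter_le_add_rk hv
  rw [sum_congr rfl fun a _ => hterm a, sum_sub_distrib, sum_boole, sum_boole,
    abs_of_nonpos (sub_nonpos.mpr hrk)]
  linarith

lemma sum_abs_rk_insert_sub_le {u v c : ℝ} {S Z : Finset ℝ} (hS : S ⊆ Z) (hu : u ∉ Z)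
    (hv : v ∉ Z) :
    ∑ a ∈ S, |(rk a (insert v Z) : ℝ) - c|
      ≤ ∑ a ∈ S, |(rk a (insert u Z) : ℝ) - c|
        + |(rk u (insert u Z) : ℝ) - rk v (insert v Z)| :=
  calc ∑ a ∈ S, |(rk a (insert v Z) : ℝ) - c|
      ≤ ∑ a ∈ S, (|(rk a (insert u Z) : ℝ) - c|
          + |(rk a (insert u Z) : ℝ) - rk a (insert v Z)|) :=
        sum_le_sum fun a _ => (abs_sub_le _ (rk a (insert u Z) : ℝ) _).trans_eq <| by
          rw [abs_sub_comm (rk a (insert v Z) : ℝ), add_comm]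
    _ ≤ ∑ a ∈ S, |(rk a (insert u Z) : ℝ) - c|
          + ∑ a ∈ Z, |(rk a (insert u Z) : ℝ) - rk a (insert v Z)| := by
        rw [sum_add_distrib]
        gcongr
    _ = ∑ a ∈ S, |(rk a (insert u Z) : ℝ) - c|
          + |(rk u (insert u Z) : ℝ) - rk v (insert v Z)| := by
        rw [sum_abs_rk_insert_sub_rk_insert hu hv, rk_self_insert hu, rk_self_insert hv]
        simp only [Nat.cast_add, Nat.cast_one, add_sub_add_right_eq_sub]

lemma abs_sub_abs_of_mul_nonneg {u v : ℝ} (h : 0 ≤ u * v) (hvu : |v| ≤ |u|) :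
    |u| - |v| = |u - v| := by
  have huv : |u| * |v| = u * v := by rw [← abs_mul, abs_of_nonneg h]
  rw [← abs_of_nonneg (sub_nonneg.mpr hvu), ← sq_eq_sq_iff_abs_eq_abs, sub_sq, sub_sq, sq_abs,
    sq_abs, mul_assoc, mul_assoc, huv]

theorem ABT_insert_le_ABT_insert {A B : Finset ℝ} {u v : ℝ} {N : ℕ} (hu : u ∉ A ∪ B)
    (hv : v ∉ A ∪ B) (hN : #(A ∪ B) + 1 = N)
    (hsign : 0 ≤ ((rk u (insert u (A ∪ B)) : ℝ) - ((N : ℝ) + 1) / 2)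
        * ((rk v (insert v (A ∪ B)) : ℝ) - ((N : ℝ) + 1) / 2))
    (habs : |(rk v (insert v (A ∪ B)) : ℝ) - ((N : ℝ) + 1) / 2|
        ≤ |(rk u (insert u (A ∪ B)) : ℝ) - ((N : ℝ) + 1) / 2|) :
    ABT (insert v A) B ≤ ABT (insert u A) B := by
  have hsplit : ∀ w ∉ A ∪ B, ABT (insert w A) B
      = |(rk w (insert w (A ∪ B)) : ℝ) - ((N : ℝ) + 1) / 2|
        + ∑ a ∈ A, |(rk a (insert w (A ∪ B)) : ℝ) - ((N : ℝ) + 1) / 2| := fun w hw => by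
    rw [ABT, insert_union, card_insert_of_notMem hw, hN,
      sum_insert fun h => hw (mem_union_left B h)]
  have hmain := abs_sub_abs_of_mul_nonneg hsign habs
  rw [sub_sub_sub_cancel_right] at hmain
  have hrest := sum_abs_rk_insert_sub_le (c := ((N : ℝ) + 1) / 2) subset_union_left hu hv
  rw [hsplit u hu, hsplit v hv]
  linarith

theorem stmt4 (X Y : Finset ℝ) (x xs : ℝ) (hd : Disjoint X Y) (hx : x ∈ X)
    (X' Xs : Finset ℝ) (hX' : X' = X.erase x) (hxs : xs ∉ X' ∪ Y)
    (hXs : Xs = insert xs X') (N : ℕ) (hN : N = X.card + Y.card)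
    (hsign : ((rk x (X ∪ Y) : ℝ) - ((N : ℝ) + 1) / 2)
        * ((rk xs (Xs ∪ Y) : ℝ) - ((N : ℝ) + 1) / 2) ≥ 0)
    (habs : |(rk x (X ∪ Y) : ℝ) - ((N : ℝ) + 1) / 2|
        ≥ |(rk xs (Xs ∪ Y) : ℝ) - ((N : ℝ) + 1) / 2|) :
    ABT X Y ≥ ABT Xs Y := by
  have hxX' : x ∉ X' := hX' ▸ notMem_erase x X
  have hX : X = insert x X' := hX' ▸ (insert_erase hx).symm
  have hxY : x ∉ Y := disjoint_left.mp hd hx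
  subst hX hXs
  have hN' : #(X' ∪ Y) + 1 = N := by
    rw [hN, card_insert_of_notMem hxX',
      card_union_of_disjoint (disjoint_of_subset_left (subset_insert _ _) hd)]
    ring
  rw [insert_union, insert_union] at hsign habs
  exact ABT_insert_le_ABT_insert (by simp [hxX', hxY]) hxs hN' hsign habs
end

section
/- Let X, Y be disjoint finite sets of distinct reals, X' ⊂ X with |X'| = n' < n = |X|, and X̂ = {x̂₁,…,x̂_{n-n'}} a set of reals with X* = X̂ ∪ X', all values in X* ∪ Y distinct. Suppose the set of ranks {rank(x̂₁, X*∪Y),…,rank(x̂_{n-n'}, X*∪Y)} consists of consecutive integers. Then for any x ∈ X': rank(x, X' ∪ Y) ≥ min_i rank(x̂ᵢ, X* ∪ Y) if and only if rank(x, X* ∪ Y) = rank(x, X' ∪ Y) + (n - n'). -/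
/-!
Put `S = X* ∪ Y`, the disjoint union of `X' ∪ Y` and `X̂`, and `m = n - n'`; then
`rank(x, S) = rank(x, X' ∪ Y) + k` where `k` counts the elements of `X̂` below `x`. Rank in `S` is
strictly monotone on `S`, so `k` is also the number of ranks of `X̂` below `rank(x, S)`, and
`rank(x, S)` is not itself one of them. These ranks fill `[a, a + m)`, hence
`k = min (a + m) (rank(x, S)) - a` and `rank(x, S) ∉ [a, a + m)`. A witness `z` gives
`a ≤ rank(x, X' ∪ Y) ≤ rank(x, S)`, so `rank(x, S) ≥ a + m` and `k = m`; conversely `k = m` forces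
`rank(x, X' ∪ Y) ≥ a`, and the element of `X̂` of rank `a` is a witness.
-/

open Finset

lemma rk_union_of_disjoint {A B : Finset ℝ} (h : Disjoint A B) (x : ℝ) :
    rk x (A ∪ B) = rk x A + rk x B := by
  rw [rk, filter_union, card_union_of_disjoint (disjoint_filter_filter h)]
  rfl

lemma rk_le_rk (Z : Finset ℝ) {x y : ℝ} (h : x ≤ y) : rk x Z ≤ rk y Z :=
  card_le_card (monotone_filter_right Z fun _ _ hw => hw.trans h)

lemma rk_lt_rk_iff {Z : Finset ℝ} {x : ℝ} (hx : x ∈ Z) (z : ℝ) :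
    rk z Z < rk x Z ↔ z < x := by
  constructor
  · intro h
    by_contra! hxz
    exact h.not_ge (rk_le_rk Z hxz)
  · intro h
    refine card_lt_card ⟨monotone_filter_right Z fun _ _ hw => hw.trans h.le, fun hsub => ?_⟩
    exact h.not_ge (mem_filter.mp (hsub (mem_filter.mpr ⟨hx, le_rfl⟩))).2

lemma rk_injOn (Z : Finset ℝ) : Set.InjOn (rk · Z) Z := by
  intro z hz w hw h
  by_contra hne
  rcases lt_or_gt_of_ne hne with hlt | hlt
  · exact ((rk_lt_rk_iff hw z).mpr hlt).ne h
  · exact ((rk_lt_rk_iff hz w).mpr hlt).ne' h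

lemma rk_eq_card_filter_image_lt {Z T : Finset ℝ} (hT : T ⊆ Z) {x : ℝ} (hx : x ∈ Z)
    (hxT : x ∉ T) : rk x T = ((T.image (rk · Z)).filter (· < rk x Z)).card := by
  have hlt : T.filter (· ≤ x) = T.filter (fun z => rk z Z < rk x Z) := by
    refine filter_congr fun z hz => ?_
    rw [rk_lt_rk_iff hx, le_iff_lt_or_eq, or_iff_left]
    rintro rfl
    exact hxT hz
  have hinj : Set.InjOn (rk · Z) (T.filter (· ≤ x)) :=
    (rk_injOn Z).mono (coe_subset.mpr ((filter_subset _ T).trans hT))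
  rw [filter_image, ← hlt, card_image_of_injOn hinj]
  rfl

lemma rk_notMem_image {Z T : Finset ℝ} (hT : T ⊆ Z) {x : ℝ} (hx : x ∈ Z) (hxT : x ∉ T) :
    rk x Z ∉ T.image (rk · Z) := by
  rw [mem_image]
  rintro ⟨z, hz, hzx⟩
  exact hxT (rk_injOn Z (hT hz) hx hzx ▸ hz)

theorem stmt12_general (Y Xp Xh Xs : Finset ℝ) (n n' : ℕ) (hlt : n' < n)
    (hXs : Xs = Xh ∪ Xp)
    (hdisj : Disjoint Xh (Xp ∪ Y))
    (hconsec : ∃ a : ℕ, Xh.image (fun z => rk z (Xs ∪ Y))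
        = Finset.Icc a (a + (n - n') - 1))
    (x : ℝ) (hx : x ∈ Xp) :
    (∃ z ∈ Xh, rk z (Xs ∪ Y) ≤ rk x (Xp ∪ Y))
      ↔ rk x (Xs ∪ Y) = rk x (Xp ∪ Y) + (n - n') := by
  obtain ⟨a, hranks⟩ := hconsec
  have hS : Xs ∪ Y = (Xp ∪ Y) ∪ Xh := by
    rw [hXs, union_comm Xh, union_right_comm, union_comm (Xp ∪ Y)]
  have hxS : x ∈ Xs ∪ Y := by rw [hS]; simp [hx]
  have hXhS : Xh ⊆ Xs ∪ Y := hS ▸ subset_union_right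
  have hxXh : x ∉ Xh := fun h => disjoint_left.mp hdisj h (mem_union_left Y hx)
  have hsplit : rk x (Xs ∪ Y) = rk x (Xp ∪ Y) + rk x Xh := by
    rw [hS, rk_union_of_disjoint hdisj.symm]
  have hIco : Xh.image (rk · (Xs ∪ Y)) = Ico a (a + (n - n')) := by
    rw [hranks]; ext r; simp only [mem_Icc, mem_Ico]; omega
  have hcount : rk x Xh = min (a + (n - n')) (rk x (Xs ∪ Y)) - a := by
    rw [rk_eq_card_filter_image_lt hXhS hxS hxXh, hIco, Ico_filter_lt, Nat.card_Ico]
  have hxgap : rk x (Xs ∪ Y) ∉ Ico a (a + (n - n')) :=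
    hIco ▸ rk_notMem_image hXhS hxS hxXh
  constructor
  · rintro ⟨z, hz, hzx⟩
    have haz : a ≤ rk z (Xs ∪ Y) := (mem_Ico.mp (hIco ▸ mem_image_of_mem _ hz)).1
    rw [mem_Ico] at hxgap
    omega
  · intro h
    have ha : a ∈ Xh.image (rk · (Xs ∪ Y)) := by rw [hIco, mem_Ico]; omega
    obtain ⟨z, hz, hza⟩ := mem_image.mp ha
    exact ⟨z, hz, by omega⟩

theorem stmt12 (X Y Xp Xh Xs : Finset ℝ) (n n' : ℕ) (hd : Disjoint X Y)
    (hsub : Xp ⊆ X) (hn : X.card = n) (hn' : Xp.card = n') (hlt : n' < n)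
    (hXh : Xh.card = n - n') (hXs : Xs = Xh ∪ Xp)
    (hdisj : Disjoint Xh (Xp ∪ Y))
    (hconsec : ∃ a : ℕ, Xh.image (fun z => rk z (Xs ∪ Y))
        = Finset.Icc a (a + (n - n') - 1))
    (x : ℝ) (hx : x ∈ Xp) :
    (∃ z ∈ Xh, rk z (Xs ∪ Y) ≤ rk x (Xp ∪ Y))
      ↔ rk x (Xs ∪ Y) = rk x (Xp ∪ Y) + (n - n') :=
  stmt12_general Y Xp Xh Xs n n' hlt hXs hdisj hconsec x hx
end

section
/- Let X = {x₁,…,xₙ} and Y = {y₁,…,y_m} be disjoint sets of distinct reals, X' ⊆ X the observed subset of size n', N = n + m. Then the minimum of T(X, Y) over all possible real values of the n - n' missing elements of X (chosen distinct from all other values) equals T(X', Y) + (n² - n'²)/4 if N odd and n - n' even, T(X', Y) + (n² - n'² - 1)/4 if N odd and n - n' odd, T(X', Y) + (n² - n'² + 1)/4 if N even and n - n' odd, and T(X', Y) + (n² - n'²)/4 if N even and n - n' even. -/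
open Finset

section Rank

variable {Z : Finset ℝ}

lemma rk_mono_s14 (Z : Finset ℝ) {a b : ℝ} (h : a ≤ b) : rk a Z ≤ rk b Z :=
  card_le_card <| monotone_filter_right _ fun _ _ hz => hz.trans h

lemma rk_lt_rk {a b : ℝ} (hb : b ∈ Z) (hab : a < b) : rk a Z < rk b Z :=
  card_lt_card <| (ssubset_iff_of_subset (monotone_filter_right _ fun _ _ hz => hz.trans hab.le)).2
    ⟨b, mem_filter.2 ⟨hb, le_rfl⟩, fun h => (mem_filter.1 h).2.not_gt hab⟩

lemma rk_strictMonoOn (Z : Finset ℝ) : StrictMonoOn (rk · Z) Z :=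
  fun _ _ _ hb hab => rk_lt_rk hb hab

lemma rk_mem_Icc {a : ℝ} (ha : a ∈ Z) : rk a Z ∈ Icc 1 #Z :=
  mem_Icc.2 ⟨card_pos.2 ⟨a, mem_filter.2 ⟨ha, le_rfl⟩⟩, card_filter_le _ _⟩

lemma image_rk_eq_Icc (Z : Finset ℝ) : Z.image (rk · Z) = Icc 1 #Z :=
  eq_of_subset_of_card_le (image_subset_iff.2 fun _ => rk_mem_Icc) <| by
    rw [card_image_of_injOn (rk_strictMonoOn Z).injOn, Nat.card_Icc, Nat.add_sub_cancel]

lemma rk_insert {x : ℝ} (a : ℝ) (hx : x ∉ Z) :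
    rk a (insert x Z) = rk a Z + if x ≤ a then 1 else 0 := by
  unfold rk
  rw [filter_insert]
  split_ifs
  · exact card_insert_of_notMem fun h => hx (mem_of_mem_filter _ h)
  · rfl

lemma card_le_of_rk_mem_Icc {S : Finset ℝ} (hS : S ⊆ Z) {lo hi : ℕ}
    (h : ∀ a ∈ S, rk a Z ∈ Icc lo hi) : #S ≤ hi + 1 - lo :=
  (card_le_card_of_injOn _ h ((rk_strictMonoOn Z).injOn.mono (coe_subset.2 hS))).trans_eq
    (Nat.card_Icc _ _)

lemma exists_notMem_rk_eq_rk (Z : Finset ℝ) (z : ℝ) : ∃ y ∉ Z, rk y Z = rk z Z := by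
  set S := insert (z + 1) (Z.filter (z < ·))
  have hS : S.Nonempty := insert_nonempty _ _
  have hzu : z < S.min' hS := by
    obtain h | h := mem_insert.1 (S.min'_mem hS)
    · rw [h]; linarith
    · exact (mem_filter.1 h).2
  have hle : ∀ w ∈ Z, w ≤ (z + S.min' hS) / 2 ↔ w ≤ z := fun w hw => by
    refine ⟨fun hwy => not_lt.1 fun hzw => ?_, fun hwz => by linarith⟩
    have := S.min'_le w (mem_insert_of_mem (mem_filter.2 ⟨hw, hzw⟩))
    linarith
  refine ⟨(z + S.min' hS) / 2, fun hy => ?_, congrArg card (filter_congr hle)⟩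
  have := (hle _ hy).1 le_rfl
  linarith

lemma exists_notMem_rk_eq {j : ℕ} (hj : j ≤ #Z) : ∃ x ∉ Z, rk x Z = j := by
  obtain rfl | hj0 := Nat.eq_zero_or_pos j
  · obtain ⟨b, hb⟩ := Z.bddBelow
    refine ⟨b - 1, fun h => by linarith [hb h],
      card_eq_zero.2 (filter_eq_empty_iff.2 fun z hz => by linarith [hb hz])⟩
  · have : j ∈ Z.image (rk · Z) := (image_rk_eq_Icc Z).symm ▸ mem_Icc.2 ⟨hj0, hj⟩
    obtain ⟨z, -, hz⟩ := mem_image.1 this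
    obtain ⟨y, hy, hyz⟩ := exists_notMem_rk_eq_rk Z z
    exact ⟨y, hy, hyz.trans hz⟩

end Rank

def doubledDev (r L : ℕ) : ℕ := (2 * (r : ℤ) - (L + 1)).natAbs

noncomputable def doubledABT (A B : Finset ℝ) : ℕ := ∑ a ∈ A, doubledDev (rk a (A ∪ B)) #(A ∪ B)

lemma ABT_eq_doubledABT_div_two (A B : Finset ℝ) : ABT A B = doubledABT A B / 2 := by
  unfold ABT doubledABT doubledDev
  push_cast
  rw [sum_div]
  refine sum_congr rfl fun a _ => ?_
  rw [Nat.cast_natAbs, Int.cast_abs]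
  push_cast
  rw [show 2 * (rk a (A ∪ B) : ℝ) - (#(A ∪ B) + 1) = 2 * (rk a (A ∪ B) - (#(A ∪ B) + 1) / 2) by
    ring, abs_mul, abs_two]
  ring

/-- The points of `A` whose doubled deviation drops by one when `x` is inserted into `Z`;
every other point of `A` gains one. -/
noncomputable def inwardMovers (x : ℝ) (A Z : Finset ℝ) : Finset ℝ :=
  A.filter fun a => (x < a ∧ 2 * rk a Z ≤ #Z) ∨ (a < x ∧ #Z + 2 ≤ 2 * rk a Z)

lemma doubledABT_insert_add {A B : Finset ℝ} {x : ℝ} (hx : x ∉ A ∪ B) :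
    doubledABT (insert x A) B + 2 * #(inwardMovers x A (A ∪ B)) =
      doubledABT A B + #A + (2 * (rk x (A ∪ B) : ℤ) - #(A ∪ B)).natAbs := by
  have hxA : x ∉ A := fun h => hx (mem_union_left _ h)
  have hrk a : rk a (insert x A ∪ B) = rk a (A ∪ B) + if x ≤ a then 1 else 0 := by
    rw [insert_union, rk_insert a hx]
  have hcard : #(insert x A ∪ B) = #(A ∪ B) + 1 := by rw [insert_union, card_insert_of_notMem hx]
  have hterm : ∀ a ∈ A, doubledDev (rk a (insert x A ∪ B)) #(insert x A ∪ B) +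
      2 * (if (x < a ∧ 2 * rk a (A ∪ B) ≤ #(A ∪ B)) ∨ (a < x ∧ #(A ∪ B) + 2 ≤ 2 * rk a (A ∪ B))
        then 1 else 0) = doubledDev (rk a (A ∪ B)) #(A ∪ B) + 1 := by
    intro a ha
    rw [hrk, hcard]
    unfold doubledDev
    rcases (ne_of_mem_of_not_mem ha hxA).symm.lt_or_gt with h | h
    · simp only [h, h.le, h.not_gt, true_and, false_and, or_false, if_true]
      split_ifs <;> omega
    · simp only [h, h.not_ge, h.not_gt, true_and, false_and, false_or, if_false]
      split_ifs <;> omega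
  unfold doubledABT inwardMovers
  rw [sum_insert hxA, card_filter, mul_sum, add_assoc, ← sum_add_distrib, sum_congr rfl hterm,
    sum_add_distrib, ← card_eq_sum_ones, hrk x, if_pos le_rfl, hcard]
  unfold doubledDev
  omega

lemma two_mul_card_inwardMovers_add_le {A Z : Finset ℝ} (hA : A ⊆ Z) (x : ℝ) :
    2 * #(inwardMovers x A Z) + #Z % 2 ≤ (2 * (rk x Z : ℤ) - #Z).natAbs := by
  by_cases hlow : 2 * rk x Z ≤ #Z
  · have := card_le_of_rk_mem_Icc (S := inwardMovers x A Z) ((filter_subset _ _).trans hA)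
      (lo := rk x Z + 1) (hi := #Z / 2) fun a ha => ?_
    · omega
    obtain ⟨haA, h | h⟩ := mem_filter.1 ha
    · exact mem_Icc.2 ⟨rk_lt_rk (hA haA) h.1, by omega⟩
    · have := rk_mono_s14 Z h.1.le; omega
  · have := card_le_of_rk_mem_Icc (S := inwardMovers x A Z) ((filter_subset _ _).trans hA)
      (lo := (#Z + 3) / 2) (hi := rk x Z) fun a ha => ?_
    · omega
    obtain ⟨haA, h | h⟩ := mem_filter.1 ha
    · have := rk_lt_rk (hA haA) h.1; omega
    · exact mem_Icc.2 ⟨by omega, rk_mono_s14 Z h.1.le⟩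

lemma doubledABT_add_le_insert {A B : Finset ℝ} {x : ℝ} (hx : x ∉ A ∪ B) :
    doubledABT A B + #A + #(A ∪ B) % 2 ≤ doubledABT (insert x A) B := by
  have := doubledABT_insert_add hx
  have := two_mul_card_inwardMovers_add_le (subset_union_left : A ⊆ A ∪ B) x
  omega

lemma exists_doubledABT_insert_eq (A B : Finset ℝ) :
    ∃ x ∉ A ∪ B, doubledABT (insert x A) B = doubledABT A B + #A + #(A ∪ B) % 2 := by
  obtain ⟨x, hx, hrk⟩ := exists_notMem_rk_eq (Z := A ∪ B) (j := (#(A ∪ B) + 1) / 2) (by omega)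
  refine ⟨x, hx, ?_⟩
  have hempty : inwardMovers x A (A ∪ B) = ∅ := filter_eq_empty_iff.2 fun a ha => by
    rintro (⟨h, h'⟩ | ⟨h, h'⟩)
    · have := rk_lt_rk (mem_union_left B ha) h; omega
    · have := rk_mono_s14 (A ∪ B) h.le; omega
  have := doubledABT_insert_add hx
  rw [hempty, card_empty] at this
  omega

def minDoubledExcess (a L k : ℕ) : ℕ := ∑ i ∈ range k, (a + i + (L + i) % 2)

lemma card_unions_of_disjoint_union {A B s : Finset ℝ} (hs : Disjoint s (A ∪ B)) :
    #(A ∪ s) = #A + #s ∧ #(A ∪ s ∪ B) = #(A ∪ B) + #s := by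
  refine ⟨card_union_of_disjoint (disjoint_union_right.1 hs).1.symm, ?_⟩
  rw [union_right_comm, card_union_of_disjoint hs.symm]

lemma doubledABT_add_le_union {A B Xt : Finset ℝ} (hd : Disjoint Xt (A ∪ B)) :
    doubledABT A B + minDoubledExcess #A #(A ∪ B) #Xt ≤ doubledABT (A ∪ Xt) B := by
  induction Xt using Finset.induction_on with
  | empty => simp [minDoubledExcess]
  | insert x s hxs ih =>
    obtain ⟨hx, hs⟩ := disjoint_insert_left.1 hd
    obtain ⟨hcA, hcZ⟩ := card_unions_of_disjoint_union hs
    have hstep := doubledABT_add_le_insert (A := A ∪ s) (B := B) (x := x) <| by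
      simp only [mem_union, not_or] at hx ⊢
      exact ⟨⟨hx.1, hxs⟩, hx.2⟩
    have := ih hs
    rw [union_insert, card_insert_of_notMem hxs, minDoubledExcess, sum_range_succ]
    rw [hcA, hcZ] at hstep
    unfold minDoubledExcess at this
    omega

lemma exists_doubledABT_union_eq (A B : Finset ℝ) (k : ℕ) :
    ∃ Xt : Finset ℝ, #Xt = k ∧ Disjoint Xt (A ∪ B) ∧
      doubledABT (A ∪ Xt) B = doubledABT A B + minDoubledExcess #A #(A ∪ B) k := by
  induction k with
  | zero => exact ⟨∅, card_empty, disjoint_empty_left _, by simp [minDoubledExcess]⟩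
  | succ k ih =>
    obtain ⟨s, hk, hs, hval⟩ := ih
    obtain ⟨hcA, hcZ⟩ := card_unions_of_disjoint_union hs
    obtain ⟨x, hx, hstep⟩ := exists_doubledABT_insert_eq (A ∪ s) B
    simp only [mem_union, not_or] at hx
    refine ⟨insert x s, by rw [card_insert_of_notMem hx.1.2, hk], ?_, ?_⟩
    · exact disjoint_insert_left.2 ⟨by simp [hx.1.1, hx.2], hs⟩
    · rw [union_insert, hstep, hval, hcA, hcZ, hk, minDoubledExcess, minDoubledExcess,
        sum_range_succ]
      ring

lemma minDoubledExcess_div_two (a L k : ℕ) :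
    (minDoubledExcess a L k : ℝ) / 2 =
      if Even k then (((a + k : ℕ) : ℝ) ^ 2 - (a : ℝ) ^ 2) / 4
      else if Odd (L + k) then (((a + k : ℕ) : ℝ) ^ 2 - (a : ℝ) ^ 2 - 1) / 4
      else (((a + k : ℕ) : ℝ) ^ 2 - (a : ℝ) ^ 2 + 1) / 4 := by
  induction k with
  | zero => simp [minDoubledExcess]
  | succ k ih =>
    rw [minDoubledExcess, sum_range_succ, Nat.cast_add, add_div, ← minDoubledExcess, ih]
    have hk1 : (k + 1) % 2 = 1 - k % 2 := by omega
    have hLk1 : (L + (k + 1)) % 2 = 1 - (L + k) % 2 := by omega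
    simp only [Nat.even_iff, Nat.odd_iff, hk1, hLk1] at ih ⊢
    rcases Nat.mod_two_eq_zero_or_one k with hk | hk <;>
      rcases Nat.mod_two_eq_zero_or_one (L + k) with hL | hL <;>
      simp only [hk, hL, ↓reduceIte, one_ne_zero, zero_ne_one, tsub_zero, tsub_self, Nat.cast_add,
        Nat.cast_one, add_zero] <;> ring

theorem stmt14 (Xp Y : Finset ℝ) (n m n' N : ℕ)
    (hd : Disjoint Xp Y) (hn' : Xp.card = n') (hle : n' ≤ n)
    (hm : Y.card = m) (hN : N = n + m) :
    IsLeast { t : ℝ | ∃ Xt : Finset ℝ, Xt.card = n - n' ∧ Disjoint Xt (Xp ∪ Y) ∧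
        t = ABT (Xp ∪ Xt) Y }
      (ABT Xp Y +
        (if Even (n - n') then ((n : ℝ) ^ 2 - (n' : ℝ) ^ 2) / 4
         else if Odd N then ((n : ℝ) ^ 2 - (n' : ℝ) ^ 2 - 1) / 4
         else ((n : ℝ) ^ 2 - (n' : ℝ) ^ 2 + 1) / 4)) := by
  obtain ⟨k, rfl⟩ := Nat.exists_eq_add_of_le hle
  subst hn' hm hN
  have hcard : #Xp + k + #Y = #(Xp ∪ Y) + k := by rw [card_union_of_disjoint hd]; ring
  rw [Nat.add_sub_cancel_left, hcard, ← minDoubledExcess_div_two]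
  constructor
  · obtain ⟨Xt, hk, hdisj, heq⟩ := exists_doubledABT_union_eq Xp Y k
    refine ⟨Xt, hk, hdisj, ?_⟩
    rw [ABT_eq_doubledABT_div_two, ABT_eq_doubledABT_div_two, heq, Nat.cast_add, add_div]
  · rintro _ ⟨Xt, rfl, hdisj, rfl⟩
    rw [ABT_eq_doubledABT_div_two, ABT_eq_doubledABT_div_two, ← add_div,
      div_le_div_iff_of_pos_right two_pos]
    exact_mod_cast doubledABT_add_le_union hdisj
end
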